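/- The function η₂(z) = (4/3) ln(1+|z|²) · (1-|z|²)/(1+|z|²) + 8/(3(1+|z|²)) satisfies Δη₂ + 8/(1+|z|²)² · η₂ = 16(1-|z|²)/(1+|z|²)³ on ℝ². -/

import Mathlib

/-!
η₂ is radial, η₂(z) = g(|z|²). For a radial function f(z) = g(|z|²) on ℝ², differentiating
twice along the line z + t eᵢ gives ∂ᵢ²f(z) = 4 zᵢ² g''(|z|²) + 2 g'(|z|²), so
Δf = 4 s g''(s) + 4 g'(s) with s = |z|². The equation thus reduces to an identity in one real
variable s > -1, in which the `log (1 + s)` terms cancel.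
-/

open Real

noncomputable abbrev E2 : Type := EuclideanSpace ℝ (Fin 2)

/-- Euclidean Laplacian on ℝ² via second directional derivatives along the
coordinate directions. -/
noncomputable def lap (f : E2 → ℝ) (x : E2) : ℝ :=
  ∑ i : Fin 2, iteratedDeriv 2 (fun t : ℝ => f (x + t • EuclideanSpace.single i 1)) 0

open scoped RealInnerProductSpace

section RadialLaplacian

variable {E : Type*} [NormedAddCommGroup E] [InnerProductSpace ℝ E] {g g' g'' : ℝ → ℝ}

theorem hasDerivAt_norm_add_smul_sq (x v : E) (t : ℝ) :
    HasDerivAt (fun t : ℝ => ‖x + t • v‖ ^ 2) (2 * ⟪x, v⟫ + 2 * ‖v‖ ^ 2 * t) t := by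
  refine (((hasDerivAt_id' t).smul_const v).const_add x).norm_sq.congr_deriv ?_
  rw [one_smul, inner_add_left, real_inner_smul_left, real_inner_self_eq_norm_sq]
  ring

theorem iteratedDeriv_two_comp_norm_add_smul_sq
    (hg : ∀ s, 0 ≤ s → HasDerivAt g (g' s) s) (hg' : ∀ s, 0 ≤ s → HasDerivAt g' (g'' s) s)
    (x v : E) :
    iteratedDeriv 2 (fun t : ℝ => g (‖x + t • v‖ ^ 2)) 0
      = 4 * ⟪x, v⟫ ^ 2 * g'' (‖x‖ ^ 2) + 2 * ‖v‖ ^ 2 * g' (‖x‖ ^ 2) := by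
  have hq := hasDerivAt_norm_add_smul_sq x v
  have hfirst : deriv (fun t : ℝ => g (‖x + t • v‖ ^ 2))
      = fun t => g' (‖x + t • v‖ ^ 2) * (2 * ⟪x, v⟫ + 2 * ‖v‖ ^ 2 * t) :=
    funext fun t => ((hg _ (sq_nonneg ‖x + t • v‖)).comp t (hq t)).deriv
  have hsecond :
      HasDerivAt (fun t => g' (‖x + t • v‖ ^ 2) * (2 * ⟪x, v⟫ + 2 * ‖v‖ ^ 2 * t))
      (g'' (‖x‖ ^ 2) * (2 * ⟪x, v⟫) * (2 * ⟪x, v⟫) + g' (‖x‖ ^ 2) * (2 * ‖v‖ ^ 2)) 0 := by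
    simpa using ((hg' _ (sq_nonneg ‖x + (0 : ℝ) • v‖)).comp 0 (hq 0)).fun_mul
      (((hasDerivAt_id' (0 : ℝ)).const_mul (2 * ‖v‖ ^ 2)).const_add (2 * ⟪x, v⟫))
  rw [iteratedDeriv_succ, iteratedDeriv_one, hfirst, hsecond.deriv]
  ring

theorem lap_comp_norm_sq (hg : ∀ s, 0 ≤ s → HasDerivAt g (g' s) s)
    (hg' : ∀ s, 0 ≤ s → HasDerivAt g' (g'' s) s) (z : E2) :
    lap (fun z => g (‖z‖ ^ 2)) z = 4 * ‖z‖ ^ 2 * g'' (‖z‖ ^ 2) + 4 * g' (‖z‖ ^ 2) := by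
  simp only [lap, iteratedDeriv_two_comp_norm_add_smul_sq hg hg',
    EuclideanSpace.inner_single_right, PiLp.norm_single, EuclideanSpace.real_norm_sq_eq z,
    Fin.sum_univ_two]
  simp only [ringHom_apply, one_mul, norm_one, one_pow, mul_one]
  ring

end RadialLaplacian

noncomputable def eta2Profile (s : ℝ) : ℝ :=
  (4 / 3) * log (1 + s) * ((1 - s) / (1 + s)) + 8 / (3 * (1 + s))

noncomputable def eta2ProfileDeriv (s : ℝ) : ℝ :=
  -8 * log (1 + s) / (3 * (1 + s) ^ 2) - 4 / (3 * (1 + s))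

noncomputable def eta2ProfileDeriv2 (s : ℝ) : ℝ :=
  (16 * log (1 + s) - 8) / (3 * (1 + s) ^ 3) + 4 / (3 * (1 + s) ^ 2)

section Eta2Profile

variable {s : ℝ}

theorem hasDerivAt_eta2Profile (hs : -1 < s) :
    HasDerivAt eta2Profile (eta2ProfileDeriv s) s := by
  have hs' : 1 + s ≠ 0 := by linarith
  have hu : HasDerivAt (fun s => 1 + s) 1 s := (hasDerivAt_id' s).const_add 1
  have hquot := ((hasDerivAt_id' s).const_sub 1).fun_div hu hs'
  have hrecip := (hasDerivAt_const s 8).fun_div (hu.const_mul 3) (mul_ne_zero three_ne_zero hs')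
  refine ((((hu.log hs').const_mul (4 / 3)).mul hquot).add hrecip).congr_deriv ?_
  unfold eta2ProfileDeriv
  field_simp
  ring

theorem hasDerivAt_eta2ProfileDeriv (hs : -1 < s) :
    HasDerivAt eta2ProfileDeriv (eta2ProfileDeriv2 s) s := by
  have hs' : 1 + s ≠ 0 := by linarith
  have hu : HasDerivAt (fun s => 1 + s) 1 s := (hasDerivAt_id' s).const_add 1
  have hlog := ((hu.log hs').const_mul (-8)).fun_div ((hu.fun_pow 2).const_mul 3)
    (mul_ne_zero three_ne_zero (pow_ne_zero 2 hs'))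
  have hrecip := (hasDerivAt_const s 4).fun_div (hu.const_mul 3) (mul_ne_zero three_ne_zero hs')
  refine (hlog.sub hrecip).congr_deriv ?_
  unfold eta2ProfileDeriv2
  field_simp
  ring

theorem eta2Profile_radial_equation (hs : -1 < s) :
    4 * s * eta2ProfileDeriv2 s + 4 * eta2ProfileDeriv s + 8 / (1 + s) ^ 2 * eta2Profile s
      = 16 * (1 - s) / (1 + s) ^ 3 := by
  have hs' : 1 + s ≠ 0 := by linarith
  unfold eta2Profile eta2ProfileDeriv eta2ProfileDeriv2
  field_simp
  ring

end Eta2Profile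

theorem eta2_equation :
    ∀ z : E2,
      lap (fun z =>
          (4 / 3) * Real.log (1 + ‖z‖ ^ 2) * ((1 - ‖z‖ ^ 2) / (1 + ‖z‖ ^ 2))
            + 8 / (3 * (1 + ‖z‖ ^ 2))) z
        + 8 / (1 + ‖z‖ ^ 2) ^ 2 *
            ((4 / 3) * Real.log (1 + ‖z‖ ^ 2) * ((1 - ‖z‖ ^ 2) / (1 + ‖z‖ ^ 2))
              + 8 / (3 * (1 + ‖z‖ ^ 2)))
        = 16 * (1 - ‖z‖ ^ 2) / (1 + ‖z‖ ^ 2) ^ 3 := by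
  intro z
  change lap (fun z => eta2Profile (‖z‖ ^ 2)) z
    + 8 / (1 + ‖z‖ ^ 2) ^ 2 * eta2Profile (‖z‖ ^ 2) = _
  rw [lap_comp_norm_sq (fun s hs => hasDerivAt_eta2Profile (by linarith))
    (fun s hs => hasDerivAt_eta2ProfileDeriv (by linarith))]
  exact eta2Profile_radial_equation (neg_one_lt_zero.trans_le (sq_nonneg _))
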